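/- arXiv:2510.02950 — 2 statements merged into one kernel-verified Lean document; each statement's English description precedes it below -/
import Mathlib

section
/- Let F be a maximum arborescence forest of digraph G, let a = (u,v) be a new arc, and suppose G + a contains a feasible path P from root r to root r' of F. Then performing the update F' = UPDATE(F, P) yields a maximum arborescence forest of G + a, whose root set equals the root set of F minus r'. -/
/-!
After the update every vertex of `p` other than `r` has exactly one parent, its predecessor on
`p`, and every other vertex keeps its parent in `F`. No vertex of `p` lies on a directed cycle:
lying on a cycle passes from a vertex to its parent, and walking back along `p` ends at `r`,
which has no parent. Hence every directed cycle would consist of arcs of `F`, so there is none,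
and with in-degrees at most one this rules out undirected cycles as well.

The update adds `|p| - 1` arcs and removes at most `|p| - 2`, since the removed arcs have distinct
heads in the tail of `p` and the root `r'` is not one of them; any arborescence forest of `G + a`
has at most one arc more than `F`. Finally the only root of `F` in the tail of `p` is `r'`: the
inner vertices of `p₁` have parents in `F`, and the vertices of `p₂` lie in the tree of `r'`.
-/

open Finset

variable {V : Type*} [Fintype V] [DecidableEq V]

/-- The in-degree of a vertex `v` in the digraph with arc set `F`. -/
def inDeg (F : Finset (V × V)) (v : V) : ℕ := (F.filter fun a => a.2 = v).card

/-- A root is a vertex of in-degree `0`. -/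
def IsRoot (F : Finset (V × V)) (v : V) : Prop := inDeg F v = 0

/-- `F` is acyclic when arc directions are forgotten (no loops, no antiparallel
pairs, and the underlying simple graph is acyclic). -/
def UndirAcyclic (F : Finset (V × V)) : Prop :=
  (∀ a ∈ F, a.1 ≠ a.2 ∧ (a.2, a.1) ∉ F) ∧
  (SimpleGraph.fromRel fun u v => (u, v) ∈ F).IsAcyclic

/-- An arborescence forest: every vertex has in-degree at most `1`, and the
graph is acyclic ignoring directions. -/
def IsArbForest (F : Finset (V × V)) : Prop :=
  (∀ v, inDeg F v ≤ 1) ∧ UndirAcyclic F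

/-- A maximum arborescence forest of `G`: an arborescence forest `F ⊆ G` of
maximum arc cardinality. -/
def IsMaxArbForest (G F : Finset (V × V)) : Prop :=
  F ⊆ G ∧ IsArbForest F ∧ ∀ F' ⊆ G, IsArbForest F' → F'.card ≤ F.card

/-- Directed reachability in arc set `G`. -/
def Reach (G : Finset (V × V)) (u v : V) : Prop :=
  Relation.ReflTransGen (fun x y => (x, y) ∈ G) u v

/-- Weak reachability: `u` and `v` are in the same weakly connected component. -/
def WReach (F : Finset (V × V)) (u v : V) : Prop :=
  Relation.ReflTransGen (fun x y => (x, y) ∈ F ∨ (y, x) ∈ F) u v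

/-- A directed path in `G`, given as its (duplicate-free) list of vertices. -/
def IsDiPath (G : Finset (V × V)) (p : List V) : Prop :=
  p.Chain' (fun u v => (u, v) ∈ G) ∧ p.Nodup

/-- The arcs of a path given as a vertex list. -/
def pathArcs (p : List V) : Finset (V × V) := (p.zip p.tail).toFinset

/-- `UPDATE(F, P)`: remove the parent arcs (all in-arcs) of every vertex of the
path `p` other than its first vertex, and add the arcs of `p`. -/
def update (F : Finset (V × V)) (p : List V) : Finset (V × V) :=
  (F.filter fun a => a.2 ∉ p.tail) ∪ pathArcs p

/-- A feasible path for `F` from root `r` to root `r'` in `G`: a directed path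
`p = p₁ ++ p₂` from `r` to `r'` such that all arcs of `p₁` belong to the
arborescence (weak component) of `r` in `F` and all vertices of `p₂` belong to
the arborescence of `r'` in `F`. -/
def FeasiblePath (G F : Finset (V × V)) (r r' : V) (p : List V) : Prop :=
  IsDiPath G p ∧ p.head? = some r ∧ p.getLast? = some r' ∧
  ∃ p₁ p₂ : List V, p = p₁ ++ p₂ ∧
    (∀ a ∈ pathArcs p₁, a ∈ F ∧ WReach F r a.1 ∧ WReach F r a.2) ∧
    (∀ v ∈ p₂, WReach F r' v)

section
omit [Fintype V]

variable {F U : Finset (V × V)} {u v w : V}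

theorem inDeg_le_one_iff :
    inDeg F v ≤ 1 ↔ ∀ u z, (u, v) ∈ F → (z, v) ∈ F → u = z := by
  simp only [inDeg, Finset.card_le_one, Finset.mem_filter, and_imp, Prod.forall]
  constructor
  · intro h u z hu hz
    exact congrArg Prod.fst (h u v hu rfl z v hz rfl)
  · rintro h u _ hu rfl z _ hz rfl
    rw [h u z hu hz]

theorem isRoot_iff : IsRoot F v ↔ ∀ u, (u, v) ∉ F := by
  simp only [IsRoot, inDeg, Finset.card_eq_zero, Finset.filter_eq_empty_iff, Prod.forall]
  exact ⟨fun h u hu => h u v hu rfl, fun h u _ hu hv => h u (hv ▸ hu)⟩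

theorem Reach.of_wReach_of_isRoot (hdeg : ∀ w, inDeg F w ≤ 1) (hu : IsRoot F u)
    (h : WReach F u v) : Reach F u v := by
  induction h with
  | refl => exact .refl
  | @tail b c _ hbc ih =>
    rcases hbc with hbc | hcb
    · exact ih.tail hbc
    · rcases Relation.ReflTransGen.cases_tail ih with rfl | ⟨d, hud, hdb⟩
      · exact absurd hcb (isRoot_iff.mp hu c)
      · rwa [inDeg_le_one_iff.mp (hdeg b) d c hdb hcb] at hud

theorem eq_of_wReach_of_isRoot (hdeg : ∀ w, inDeg F w ≤ 1) (hu : IsRoot F u)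
    (hv : IsRoot F v) (h : WReach F u v) : u = v := by
  rcases Relation.ReflTransGen.cases_tail (Reach.of_wReach_of_isRoot hdeg hu h) with
    rfl | ⟨c, -, hcv⟩
  · rfl
  · exact absurd hcv (isRoot_iff.mp hv c)

theorem IsArbForest.of_subset {F' : Finset (V × V)} (hF : IsArbForest F) (h : F' ⊆ F) :
    IsArbForest F' := by
  obtain ⟨hdeg, hloop, hacyc⟩ := hF
  refine ⟨fun v => (Finset.card_le_card (Finset.filter_subset_filter _ h)).trans (hdeg v),
    fun a ha => ⟨(hloop a (h ha)).1, fun h' => (hloop a (h ha)).2 (h h')⟩, ?_⟩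
  have hle : SimpleGraph.fromRel (fun s t : V => (s, t) ∈ F') ≤
      SimpleGraph.fromRel (fun s t : V => (s, t) ∈ F) := by
    intro x y hxy
    rw [SimpleGraph.fromRel_adj] at hxy ⊢
    exact ⟨hxy.1, hxy.2.imp (h ·) (h ·)⟩
  exact fun v c hc => hacyc (c.mapLe hle) (hc.mapLe hle)

/-- The arc `(u, v)` is a bridge of the underlying forest, yet a directed path from `v` to `u`
would connect its ends without crossing it. -/
theorem IsArbForest.not_reach_of_mem (hF : IsArbForest F) (huv : (u, v) ∈ F) :
    ¬ Reach F v u := by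
  obtain ⟨-, hloop, hacyc⟩ := hF
  set H := SimpleGraph.fromRel fun x y : V => (x, y) ∈ F
  have hadj : H.Adj u v := (SimpleGraph.fromRel_adj _ _ _).mpr ⟨(hloop _ huv).1, .inl huv⟩
  have key : ∀ x, Reach F x u → (H.deleteEdges {s(u, v)}).Reachable x u := by
    intro x hxu
    induction hxu using Relation.ReflTransGen.head_induction_on with
    | refl => rfl
    | @head x y hxy _ ih =>
      by_cases hxu : x = u
      · rw [hxu]
      · refine SimpleGraph.Adj.reachable ?_ |>.trans ih
        refine ⟨(SimpleGraph.fromRel_adj _ _ _).mpr ⟨(hloop _ hxy).1, .inl hxy⟩, ?_⟩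
        rw [SimpleGraph.fromEdgeSet_adj, Set.mem_singleton_iff, Sym2.eq_iff]
        rintro ⟨⟨rfl, rfl⟩ | ⟨rfl, rfl⟩, -⟩
        · exact hxu rfl
        · exact (hloop _ huv).2 hxy
  exact fun hvu => SimpleGraph.isBridge_iff.mp
    (SimpleGraph.isAcyclic_iff_forall_adj_isBridge.mp hacyc hadj) (key v hvu).symm

/-- With in-degrees at most one, a path leaving `x` away from the parent `z` of `x` can never
traverse an arc backwards, since the head of that arc would be a second parent. -/
theorem reach_of_isPath (hdeg : ∀ w, inDeg U w ≤ 1) :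
    ∀ {x y : V} (q : (SimpleGraph.fromRel fun s t : V => (s, t) ∈ U).Walk x y), q.IsPath →
      ∀ z, (z, x) ∈ U → z ∉ q.support ∨ (z = y ∧ 2 ≤ q.length) → Reach U x y := by
  intro x y q
  induction q with
  | nil => exact fun _ _ _ _ => .refl
  | @cons x b y hxb q ih =>
    intro hq z hzx hz
    rw [SimpleGraph.Walk.cons_isPath_iff] at hq
    rcases ((SimpleGraph.fromRel_adj _ _ _).mp hxb).2 with hxb | hbx
    · exact .head hxb (ih hq.1 x hxb (.inl hq.2))
    · have hzb : z ≠ b := by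
        rcases hz with hz | ⟨rfl, hlen⟩
        · rintro rfl
          exact hz (q.support_cons _ ▸ List.mem_cons_of_mem _ q.start_mem_support)
        · rintro rfl
          have := SimpleGraph.Walk.length_eq_zero_iff.mpr (SimpleGraph.Walk.isPath_iff_nil.mp hq.1)
          rw [SimpleGraph.Walk.length_cons] at hlen
          omega
      exact absurd (inDeg_le_one_iff.mp (hdeg x) z b hzx hbx) hzb

theorem undirAcyclic_of_not_reach (hdeg : ∀ w, inDeg U w ≤ 1)
    (hU : ∀ u v, (u, v) ∈ U → ¬ Reach U v u) : UndirAcyclic U := by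
  constructor
  · exact fun a ha => ⟨fun h => hU _ _ ha (h ▸ .refl), fun h => hU _ _ ha (.single h)⟩
  intro w c hc
  cases c with
  | nil => exact hc.ne_nil rfl
  | @cons _ b _ hwb q =>
    have hq := ((SimpleGraph.Walk.cons_isCycle_iff q hwb).mp hc).1
    have hlen : 2 ≤ q.length := by
      have := hc.three_le_length
      rw [SimpleGraph.Walk.length_cons] at this
      omega
    rcases ((SimpleGraph.fromRel_adj _ _ _).mp hwb).2 with hwb | hbw
    · exact hU _ _ hwb (reach_of_isPath hdeg q hq w hwb (.inr ⟨rfl, hlen⟩))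
    · exact hU _ _ hbw (reach_of_isPath hdeg q.reverse hq.reverse b hbw
        (.inr ⟨rfl, by simpa using hlen⟩))

def OnCycle (U : Finset (V × V)) (v : V) : Prop := ∃ u, (u, v) ∈ U ∧ Reach U v u

omit [DecidableEq V] in
theorem OnCycle.of_forall_eq (hv : OnCycle U v) (hpar : ∀ z, (z, v) ∈ U → z = u) :
    OnCycle U u := by
  obtain ⟨x, hxv, hvx⟩ := hv
  obtain rfl := hpar x hxv
  rcases Relation.ReflTransGen.cases_tail hvx with rfl | ⟨c, hvc, hcx⟩
  · exact ⟨_, hxv, .refl⟩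
  · exact ⟨c, hcx, .head hxv hvc⟩

omit [DecidableEq V] in
/-- Along a chain in which each vertex is the only parent of the next, lying on a cycle
propagates backwards to the first vertex. -/
theorem not_onCycle_of_isChain :
    ∀ (l : List V) (w : V), ¬ OnCycle U w →
      (w :: l).IsChain (fun x y => ∀ z, (z, y) ∈ U → z = x) →
      ∀ v ∈ w :: l, ¬ OnCycle U v
  | [], w, hw, _, v, hv => by rwa [List.mem_singleton.mp hv]
  | b :: l, w, hw, hc, v, hv => by
    rw [List.isChain_cons_cons] at hc
    have hb : ¬ OnCycle U b := fun hb => hw (hb.of_forall_eq hc.1)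
    rcases List.mem_cons.mp hv with rfl | hv
    · exact hw
    · exact not_onCycle_of_isChain l b hb hc.2 v hv

/-- Every arc of a directed cycle of `U` ends at a vertex on a cycle, so by `hUF` the cycle lies
in `F`. -/
theorem IsArbForest.not_reach_of_onCycle (hF : IsArbForest F)
    (hUF : ∀ x z, (x, z) ∈ U → OnCycle U z → (x, z) ∈ F) (huv : (u, v) ∈ U) :
    ¬ Reach U v u := by
  intro hvu
  have key : ∀ y, Reach U v y → Reach U y v → Reach F v y := by
    intro y hvy
    induction hvy with
    | refl => exact fun _ => .refl
    | @tail c y hvc hcy ih =>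
      exact fun hyv => (ih (.head hcy hyv)).tail (hUF c y hcy ⟨c, hcy, hyv.trans hvc⟩)
  exact hF.not_reach_of_mem (hUF u v huv ⟨u, huv, hvu⟩) (key u hvu (.single huv))

variable {p : List V}

@[simp]
theorem pathArcs_cons_cons (x y : V) (l : List V) :
    pathArcs (x :: y :: l) = insert (x, y) (pathArcs (y :: l)) := by
  simp [pathArcs]

theorem snd_mem_tail_of_mem_pathArcs {a : V × V} (h : a ∈ pathArcs p) : a.2 ∈ p.tail :=
  (List.of_mem_zip (List.mem_toFinset.mp h)).2

theorem exists_mem_pathArcs_of_mem_tail :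
    ∀ {p : List V}, v ∈ p.tail → ∃ u, (u, v) ∈ pathArcs p
  | [], h | [_], h => by simp at h
  | x :: b :: l, h => by
    rcases List.mem_cons.mp h with rfl | h
    · exact ⟨x, by simp⟩
    · obtain ⟨u, hu⟩ := exists_mem_pathArcs_of_mem_tail (p := b :: l) h
      exact ⟨u, by simp [hu]⟩

theorem eq_of_mem_pathArcs :
    ∀ {p : List V}, p.Nodup → (u, v) ∈ pathArcs p → (w, v) ∈ pathArcs p → u = w
  | [], _, h, _ | [_], _, h, _ => by simp [pathArcs] at h
  | x :: b :: l, hp, hu, hw => by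
    have hb : ∀ z, (z, b) ∉ pathArcs (b :: l) := fun z h =>
      (List.nodup_cons.mp (List.nodup_cons.mp hp).2).1 (snd_mem_tail_of_mem_pathArcs h)
    rw [pathArcs_cons_cons, Finset.mem_insert, Prod.mk.injEq] at hu hw
    rcases hu with ⟨rfl, rfl⟩ | hu
    · rcases hw with ⟨rfl, -⟩ | hw
      · rfl
      · exact absurd hw (hb w)
    · rcases hw with ⟨rfl, rfl⟩ | hw
      · exact absurd hu (hb u)
      · exact eq_of_mem_pathArcs (List.nodup_cons.mp hp).2 hu hw

theorem isChain_iff_forall_mem_pathArcs {R : V → V → Prop} :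
    ∀ {p : List V}, p.IsChain R ↔ ∀ a ∈ pathArcs p, R a.1 a.2
  | [] | [_] => by simp [pathArcs]
  | x :: b :: l => by
    simp [List.isChain_cons_cons, isChain_iff_forall_mem_pathArcs (p := b :: l)]

theorem card_pathArcs (hp : p.Nodup) : #(pathArcs p) = p.tail.length := by
  have hlen : p.tail.length ≤ p.length := by simp
  rw [pathArcs, List.toFinset_card_of_nodup, List.length_zip, min_eq_right hlen]
  apply List.Nodup.of_map Prod.snd
  rw [List.map_snd_zip hlen]
  exact hp.tail

theorem mem_update_of_notMem_tail (hv : v ∉ p.tail) : (u, v) ∈ update F p ↔ (u, v) ∈ F := by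
  simp only [update, Finset.mem_union, Finset.mem_filter, hv, not_false_eq_true, and_true,
    or_iff_left_iff_imp]
  exact fun h => absurd (snd_mem_tail_of_mem_pathArcs h) hv

theorem mem_update_of_mem_tail (hv : v ∈ p.tail) :
    (u, v) ∈ update F p ↔ (u, v) ∈ pathArcs p := by
  simp [update, hv]

theorem inDeg_update_le_one (hdeg : ∀ w, inDeg F w ≤ 1) (hp : p.Nodup) (v : V) :
    inDeg (update F p) v ≤ 1 := by
  rw [inDeg_le_one_iff]
  by_cases hv : v ∈ p.tail
  · simp only [mem_update_of_mem_tail hv]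
    exact fun _ _ => eq_of_mem_pathArcs hp
  · simp only [mem_update_of_notMem_tail hv]
    exact inDeg_le_one_iff.mp (hdeg v)

theorem isRoot_update_iff : IsRoot (update F p) v ↔ IsRoot F v ∧ v ∉ p.tail := by
  by_cases hv : v ∈ p.tail
  · obtain ⟨u, hu⟩ := exists_mem_pathArcs_of_mem_tail hv
    simp only [hv, not_true_eq_false, and_false, iff_false, isRoot_iff, not_forall, not_not]
    exact ⟨u, (mem_update_of_mem_tail hv).mpr hu⟩
  · simp only [isRoot_iff, mem_update_of_notMem_tail hv, hv, not_false_eq_true, and_true]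

theorem not_onCycle_update {r : V} {t : List V} (hr : IsRoot F r) (hp : (r :: t).Nodup) :
    ∀ v ∈ r :: t, ¬ OnCycle (update F (r :: t)) v := by
  refine not_onCycle_of_isChain t r ?_ (isChain_iff_forall_mem_pathArcs.mpr ?_)
  · rintro ⟨u, hur, -⟩
    exact isRoot_iff.mp hr u ((mem_update_of_notMem_tail (List.nodup_cons.mp hp).1).mp hur)
  · intro a ha z hz
    have hat := snd_mem_tail_of_mem_pathArcs ha
    exact eq_of_mem_pathArcs hp ((mem_update_of_mem_tail hat).mp hz) ha

theorem isArbForest_update {r : V} {t : List V} (hF : IsArbForest F) (hr : IsRoot F r)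
    (hp : (r :: t).Nodup) : IsArbForest (update F (r :: t)) := by
  have hdeg := inDeg_update_le_one hF.1 hp
  refine ⟨hdeg, undirAcyclic_of_not_reach hdeg fun u v huv => hF.not_reach_of_onCycle ?_ huv⟩
  intro x z hxz hz
  have hzt : z ∉ t := fun hzt => not_onCycle_update hr hp z (List.mem_cons_of_mem r hzt) hz
  exact (mem_update_of_notMem_tail hzt).mp hxz

theorem update_subset {G : Finset (V × V)} (hF : F ⊆ G)
    (hp : p.IsChain fun u v => (u, v) ∈ G) : update F p ⊆ G :=
  Finset.union_subset ((Finset.filter_subset _ _).trans hF)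
    fun a ha => isChain_iff_forall_mem_pathArcs.mp hp a ha

/-- The arcs of `F` dropped by the update have distinct heads in `p.tail`, none of them the root
`r'`, while every vertex of `p.tail` gains an arc. -/
theorem card_lt_card_update {r' : V} (hdeg : ∀ w, inDeg F w ≤ 1) (hp : p.Nodup)
    (hr' : IsRoot F r') (hr'p : r' ∈ p.tail) : #F < #(update F p) := by
  have hdisj : Disjoint (F.filter fun a => a.2 ∉ p.tail) (pathArcs p) :=
    Finset.disjoint_left.mpr fun a ha ha' =>
      (Finset.mem_filter.mp ha).2 (snd_mem_tail_of_mem_pathArcs ha')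
  have hdropped : #(F.filter fun a => a.2 ∈ p.tail) < p.tail.length := by
    calc #(F.filter fun a => a.2 ∈ p.tail)
        ≤ #(p.tail.toFinset.erase r') := by
          refine Finset.card_le_card_of_injOn Prod.snd (fun a ha => ?_) fun a ha b hb hab => ?_
          · rw [Finset.mem_coe, Finset.mem_filter] at ha
            exact Finset.mem_erase.mpr
              ⟨fun h => isRoot_iff.mp hr' a.1 (h ▸ ha.1), List.mem_toFinset.mpr ha.2⟩
          · rw [Finset.mem_coe, Finset.mem_filter] at ha hb
            refine Prod.ext (inDeg_le_one_iff.mp (hdeg a.2) a.1 b.1 ha.1 ?_) hab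
            exact hab ▸ hb.1
      _ < #p.tail.toFinset := Finset.card_erase_lt_of_mem (List.mem_toFinset.mpr hr'p)
      _ = p.tail.length := List.toFinset_card_of_nodup hp.tail
  rw [update, Finset.card_union_of_disjoint hdisj, card_pathArcs hp]
  have := Finset.card_filter_add_card_filter_not (s := F) fun a : V × V => a.2 ∈ p.tail
  omega

theorem IsMaxArbForest.insert_of_card_lt {G : Finset (V × V)} {a : V × V}
    (hF : IsMaxArbForest G F) (hUG : U ⊆ insert a G) (hU : IsArbForest U) (hlt : #F < #U) :
    IsMaxArbForest (insert a G) U := by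
  refine ⟨hUG, hU, fun F' hF'G hF' => ?_⟩
  have herase : #(F'.erase a) ≤ #F :=
    hF.2.2 _ (Finset.subset_insert_iff.mp hF'G) (hF'.of_subset (Finset.erase_subset a F'))
  have := Finset.pred_card_le_card_erase (s := F') (a := a)
  omega

theorem eq_of_isRoot_of_mem_tail {r' : V} {p₁ p₂ : List V} (hdeg : ∀ w, inDeg F w ≤ 1)
    (hr' : IsRoot F r') (hp₁ : ∀ a ∈ pathArcs p₁, a ∈ F)
    (hp₂ : ∀ v ∈ p₂, WReach F r' v) (hv : IsRoot F v)
    (hvt : v ∈ (p₁ ++ p₂).tail) : v = r' := by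
  have hvt' : v ∈ p₁.tail ∨ v ∈ p₂ := by
    cases p₁ with
    | nil => exact .inr (List.mem_of_mem_tail hvt)
    | cons x l => simpa using hvt
  rcases hvt' with hvt | hvp
  · obtain ⟨u, hu⟩ := exists_mem_pathArcs_of_mem_tail hvt
    exact absurd (hp₁ _ hu) (isRoot_iff.mp hv u)
  · exact (eq_of_wReach_of_isRoot hdeg hr' hv (hp₂ v hvp)).symm

end

theorem stmt5_general (G F : Finset (V × V)) (a : V × V) (r r' : V) (p : List V)
    (hF : IsMaxArbForest G F) (hrr : r ≠ r')
    (hr : IsRoot F r) (hr' : IsRoot F r')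
    (hp : FeasiblePath (insert a G) F r r' p) :
    IsMaxArbForest (insert a G) (update F p) ∧
    ∀ v : V, IsRoot (update F p) v ↔ IsRoot F v ∧ v ≠ r' := by
  have hFarb := hF.2.1
  obtain ⟨⟨hchain, hnodup⟩, hhead, hlast, p₁, p₂, hsplit, hp₁, hp₂⟩ := hp
  obtain ⟨t, rfl⟩ := List.head?_eq_some_iff.mp hhead
  have hr't : r' ∈ t := by
    cases t with
    | nil => exact absurd (Option.some.inj hlast) hrr
    | cons b l => exact List.mem_of_getLast? (List.getLast?_cons_cons ▸ hlast)
  refine ⟨hF.insert_of_card_lt (update_subset (hF.1.trans (Finset.subset_insert a G)) hchain)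
    (isArbForest_update hFarb hr hnodup) (card_lt_card_update hFarb.1 hnodup hr' hr't), ?_⟩
  refine fun v => isRoot_update_iff.trans <|
    and_congr_right fun hv => not_congr ⟨fun hvt => ?_, ?_⟩
  · exact eq_of_isRoot_of_mem_tail hFarb.1 hr' (fun a ha => (hp₁ a ha).1) hp₂ hv
      (hsplit ▸ hvt)
  · rintro rfl
    exact hr't

/-- If adding arc `a` to `G` creates a feasible path `p` from root `r` to root
`r'` of a maximum arborescence forest `F` of `G`, then `UPDATE(F, p)` is a
maximum arborescence forest of `G + a` whose root set is that of `F` minus `r'`. -/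
theorem stmt5 (G F : Finset (V × V)) (a : V × V) (r r' : V) (p : List V)
    (hF : IsMaxArbForest G F) (ha : a ∉ G) (hrr : r ≠ r')
    (hr : IsRoot F r) (hr' : IsRoot F r')
    (hp : FeasiblePath (insert a G) F r r' p) :
    IsMaxArbForest (insert a G) (update F p) ∧
    ∀ v : V, IsRoot (update F p) v ↔ IsRoot F v ∧ v ≠ r' :=
  stmt5_general G F a r r' p hF hrr hr hr' hp
end

section
/- Let F be a maximum arborescence forest of digraph G. Then the in-components (in G) of distinct roots of F are pairwise disjoint, each root's in-component is fully contained in its own arborescence, and hence the sum over roots r of the size of the in-component of r is at most n. -/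
open Finset

variable {V : Type*} [Fintype V] [DecidableEq V]

/-
Let `v = v₀ → v₁ → ⋯ → vₖ = r` be a path of `G` into a root `r` of `F`, and suppose `u = v₁`
lies in the arborescence of `r` but `v` does not. If `u = r`, adding the arc `(v, r)` to `F`
gives a larger forest. Otherwise, replacing the parent arc of `u` by `(v, u)` gives another
maximum forest in which `r` is still a root but `u` has left its arborescence. Induction on
the path length, over all maximum forests at once, rules out both cases. Two roots in one
arborescence coincide, so the in-components of distinct roots are disjoint, and the bound on
the sum follows.
-/

open Finset

section

omit [Fintype V] [DecidableEq V]

variable {F F' G : Finset (V × V)} {r u v w : V}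

lemma Reach.wreach (h : Reach F u v) : WReach F u v :=
  Relation.ReflTransGen.mono (fun _ _ => Or.inl) _ _ h

lemma WReach.symm (h : WReach F u v) : WReach F v u := by
  induction h with
  | refl => exact .refl
  | tail _ hbc ih => exact Relation.ReflTransGen.head hbc.symm ih

lemma WReach.trans {x : V} (h₁ : WReach F u v) (h₂ : WReach F v x) : WReach F u x :=
  Relation.ReflTransGen.trans h₁ h₂

lemma WReach.mono (hFF' : F ⊆ F') (h : WReach F u v) : WReach F' u v :=
  Relation.ReflTransGen.mono (fun _ _ => Or.imp (@hFF' _) (@hFF' _)) _ _ h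

lemma wreach_of_reachable_fromRel
    (h : (SimpleGraph.fromRel fun x y => (x, y) ∈ F).Reachable u v) : WReach F u v :=
  Relation.ReflTransGen.mono (fun _ _ hxy => hxy.2) _ _
    ((SimpleGraph.reachable_iff_reflTransGen _ _).1 h)

lemma fromRel_mono (h : F ⊆ F') :
    (SimpleGraph.fromRel fun x y => (x, y) ∈ F) ≤ SimpleGraph.fromRel fun x y => (x, y) ∈ F' :=
  fun _ _ hxy => ⟨hxy.1, hxy.2.imp (@h _) (@h _)⟩

variable [DecidableEq V]

lemma fromRel_insert (a : V × V) :
    (SimpleGraph.fromRel fun x y => (x, y) ∈ insert a F) =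
      (SimpleGraph.fromRel fun x y => (x, y) ∈ F) ⊔ SimpleGraph.edge a.1 a.2 := by
  ext x y
  simp only [SimpleGraph.fromRel_adj, SimpleGraph.sup_adj, SimpleGraph.edge_adj, mem_insert,
    Prod.ext_iff]
  tauto

lemma inDeg_mono (h : F ⊆ F') (v : V) : inDeg F v ≤ inDeg F' v :=
  card_le_card (filter_subset_filter _ h)

lemma inDeg_insert_of_ne {a : V × V} (h : a.2 ≠ v) : inDeg (insert a F) v = inDeg F v := by
  unfold inDeg
  rw [filter_insert, if_neg h]

lemma inDeg_insert_le (a : V × V) (v : V) : inDeg (insert a F) v ≤ inDeg F v + 1 := by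
  unfold inDeg
  rw [filter_insert]
  split_ifs
  exacts [card_insert_le _ _, Nat.le_succ _]

lemma inDeg_erase {a : V × V} (ha : a ∈ F) : inDeg (F.erase a) a.2 = inDeg F a.2 - 1 := by
  unfold inDeg
  rw [filter_erase, card_erase_of_mem (s := F.filter fun b => b.2 = a.2) (mem_filter.2 ⟨ha, rfl⟩)]

lemma eq_of_mem_of_inDeg_le_one (hdeg : inDeg F v ≤ 1) (hu : (u, v) ∈ F) (hw : (w, v) ∈ F) :
    u = w :=
  congrArg Prod.fst (card_le_one.1 hdeg _ (mem_filter.2 ⟨hu, rfl⟩) _ (mem_filter.2 ⟨hw, rfl⟩))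

lemma IsRoot.eq_of_reach (hr : IsRoot F r) (h : Reach F u r) : u = r := by
  obtain rfl | ⟨c, -, hc⟩ := Relation.ReflTransGen.cases_tail h
  · rfl
  · have hcr : (c, r) ∈ F.filter fun a => a.2 = r := mem_filter.2 ⟨hc, rfl⟩
    exact (card_ne_zero_of_mem hcr hr).elim

lemma WReach.exists_reach_reach (hdeg : ∀ x, inDeg F x ≤ 1) (h : WReach F u v) :
    ∃ t, Reach F t u ∧ Reach F t v := by
  induction h using Relation.ReflTransGen.head_induction_on with
  | refl => exact ⟨v, .refl, .refl⟩
  | @head a c hac _ ih =>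
    obtain ⟨t, htc, htv⟩ := ih
    rcases hac with hac | hca
    · obtain rfl | ⟨d, htd, hdc⟩ := Relation.ReflTransGen.cases_tail htc
      · exact ⟨a, .refl, Relation.ReflTransGen.head hac htv⟩
      · obtain rfl := eq_of_mem_of_inDeg_le_one (hdeg c) hdc hac
        exact ⟨t, htd, htv⟩
    · exact ⟨t, Relation.ReflTransGen.tail htc hca, htv⟩

lemma IsRoot.reach_of_wreach (hdeg : ∀ x, inDeg F x ≤ 1) (hr : IsRoot F r)
    (h : WReach F r v) : Reach F r v := by
  obtain ⟨t, htr, htv⟩ := h.exists_reach_reach hdeg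
  rwa [hr.eq_of_reach htr] at htv

lemma IsArbForest.mono (hF : IsArbForest F) (h : F' ⊆ F) : IsArbForest F' :=
  ⟨fun x => (inDeg_mono h x).trans (hF.1 x),
    fun a ha => (hF.2.1 a (h ha)).imp_right (mt (@h _)),
    hF.2.2.anti (fromRel_mono h)⟩

lemma IsArbForest.insert (hF : IsArbForest F) (hu : inDeg F u = 0) (hv : ¬WReach F u v) :
    IsArbForest (insert (v, u) F) := by
  have hne : v ≠ u := by rintro rfl; exact hv .refl
  have huv : (u, v) ∉ F := fun h => hv (.single (.inl h))
  refine ⟨fun x => ?_, ?_, ?_⟩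
  · by_cases hx : u = x
    · subst hx
      exact (inDeg_insert_le _ _).trans (by omega)
    · rw [inDeg_insert_of_ne hx]
      exact hF.1 x
  · rintro ⟨x, y⟩ hxy
    rcases mem_insert.1 hxy with h | h
    · simp_all [hne.symm]
    · have := hF.2.1 _ h
      refine ⟨this.1, ?_⟩
      simp only [mem_insert, Prod.ext_iff, not_or]
      refine ⟨?_, this.2⟩
      rintro ⟨rfl, rfl⟩
      exact huv h
  · rw [fromRel_insert]
    exact hF.2.2.sup_edge_of_not_reachable fun h => hv (wreach_of_reachable_fromRel h).symm

lemma IsMaxArbForest.wreach_of_mem_of_isRoot (hF : IsMaxArbForest G F) (hu : IsRoot F u)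
    (hvu : (v, u) ∈ G) : WReach F u v := by
  by_contra hv
  have hcard := hF.2.2 _ (insert_subset hvu hF.1) (hF.2.1.insert hu hv)
  rw [card_insert_of_notMem fun h => hv (.single (.inr h))] at hcard
  omega

lemma not_reach_insert_erase (hdeg : inDeg F u ≤ 1) (hwu : (w, u) ∈ F) (hru : r ≠ u)
    (hv : ¬Reach F r v) : ¬Reach (insert (v, u) (F.erase (w, u))) r u := by
  -- the only arc into `u` left is `(v, u)`, and `v` is out of reach until `u` is reached
  suffices ∀ b, Reach (insert (v, u) (F.erase (w, u))) r b → Reach F r b ∧ b ≠ u from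
    fun h => (this u h).2 rfl
  intro b hb
  induction hb with
  | refl => exact ⟨.refl, hru⟩
  | @tail p q _ hpq ih =>
    rcases mem_insert.1 hpq with hpq | hpq
    · cases hpq
      exact absurd ih.1 hv
    · obtain ⟨hpw, hpqF⟩ := mem_erase.1 hpq
      refine ⟨Relation.ReflTransGen.tail ih.1 hpqF, ?_⟩
      rintro rfl
      exact hpw (by rw [eq_of_mem_of_inDeg_le_one hdeg hpqF hwu])

lemma IsMaxArbForest.exists_isRoot_not_wreach (hF : IsMaxArbForest G F) (hr : IsRoot F r)
    (hu : WReach F r u) (hv : ¬WReach F r v) (hvu : (v, u) ∈ G) :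
    ∃ F', IsMaxArbForest G F' ∧ IsRoot F' r ∧ ¬WReach F' r u := by
  have hdeg := hF.2.1.1
  have hur : u ≠ r := by
    rintro rfl
    exact hv (hF.wreach_of_mem_of_isRoot hr hvu)
  obtain ⟨w, -, hwu⟩ :=
    (Relation.ReflTransGen.cases_tail (hr.reach_of_wreach hdeg hu)).resolve_left hur
  set F₀ := F.erase (w, u)
  have hu₀ : inDeg F₀ u = 0 := by
    rw [inDeg_erase hwu]
    exact Nat.sub_eq_zero_of_le (hdeg u)
  have hv₀ : ¬WReach F₀ u v := fun h => hv (hu.trans (h.mono (erase_subset _ _)))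
  have hcard : (insert (v, u) F₀).card = F.card := by
    rw [card_insert_of_notMem fun h => hv₀ (.single (.inr h)), card_erase_add_one hwu]
  have hF' : IsMaxArbForest G (insert (v, u) F₀) :=
    ⟨insert_subset hvu ((erase_subset _ _).trans hF.1),
      (hF.2.1.mono (erase_subset _ _)).insert hu₀ hv₀,
      fun F'' hsub harb => hcard ▸ hF.2.2 F'' hsub harb⟩
  have hr' : IsRoot (insert (v, u) F₀) r := by
    unfold IsRoot
    rw [inDeg_insert_of_ne hur]
    exact Nat.le_zero.1 (hr ▸ inDeg_mono (erase_subset _ _) r)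
  exact ⟨_, hF', hr', fun h => not_reach_insert_erase (hdeg u) hwu (Ne.symm hur)
    (mt Reach.wreach hv) (hr'.reach_of_wreach hF'.2.1.1 h)⟩

theorem IsMaxArbForest.wreach_of_reach (hF : IsMaxArbForest G F) (hr : IsRoot F r)
    (h : Reach G v r) : WReach F r v := by
  induction h using Relation.ReflTransGen.head_induction_on generalizing F with
  | refl => exact .refl
  | head hvu _ ih =>
    by_contra hv
    obtain ⟨F', hF', hr', hu'⟩ := hF.exists_isRoot_not_wreach hr (ih hF hr) hv hvu
    exact hu' (ih hF' hr')

theorem IsMaxArbForest.disjoint_reach (hF : IsMaxArbForest G F) {r' : V} (hr : IsRoot F r)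
    (hr' : IsRoot F r') (hne : r ≠ r') : Disjoint {v | Reach G v r} {v | Reach G v r'} :=
  Set.disjoint_left.2 fun _ hv hv' => hne <| hr'.eq_of_reach <| hr.reach_of_wreach hF.2.1.1 <|
    (hF.wreach_of_reach hr hv).trans (hF.wreach_of_reach hr' hv').symm

end

lemma Finset.sum_ncard_le_card_of_pairwiseDisjoint {ι α : Type*} [Fintype α] (s : Finset ι)
    (f : ι → Set α) (h : (s : Set ι).PairwiseDisjoint f) :
    ∑ i ∈ s, (f i).ncard ≤ Fintype.card α := by
  calc ∑ i ∈ s, (f i).ncard = (⋃ i ∈ s, f i).ncard := by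
        rw [← set_biUnion_coe, s.finite_toSet.ncard_biUnion (fun _ _ => Set.toFinite _) h,
          finsum_mem_coe_finset]
    _ ≤ (Set.univ : Set α).ncard := Set.ncard_le_ncard (Set.subset_univ _)
    _ = Fintype.card α := by rw [Set.ncard_univ, Nat.card_eq_fintype_card]

/-- For a maximum arborescence forest `F` of `G`: the in-components (in `G`) of
distinct roots of `F` are pairwise disjoint, each root's in-component is
contained in its own arborescence, and the in-component sizes of the roots sum
to at most `n`. -/
theorem stmt19 (G F : Finset (V × V)) (hF : IsMaxArbForest G F) :
    (∀ r r' : V, IsRoot F r → IsRoot F r' → r ≠ r' →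
      Disjoint {v : V | Reach G v r} {v : V | Reach G v r'}) ∧
    (∀ r : V, IsRoot F r → {v : V | Reach G v r} ⊆ {v : V | WReach F r v}) ∧
    ∑ r ∈ Finset.univ.filter (fun r => inDeg F r = 0), {v : V | Reach G v r}.ncard
      ≤ Fintype.card V := by
  refine ⟨fun _ _ hr hr' hne => hF.disjoint_reach hr hr' hne,
    fun _ hr _ hv => hF.wreach_of_reach hr hv, ?_⟩
  exact sum_ncard_le_card_of_pairwiseDisjoint _ _ fun r hr r' hr' hne =>
    hF.disjoint_reach (mem_filter.1 hr).2 (mem_filter.1 hr').2 hne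
end
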